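/- arXiv:math/0501284 — 8 statements merged into one kernel-verified Lean document; each statement's English description precedes it below -/
import Mathlib

section
/- Let G be a group, H a subgroup of G, and γ ∈ G an element of infinite order such that for every positive integer n the centralizer of γ^n in G equals the cyclic subgroup generated by γ. Suppose a ∈ G is such that the orbit of the coset aH under left multiplication by γ on G/H is finite of cardinality m. Then the element a⁻¹γ^m a belongs to H and is primitive in H. -/
/-- Let `γ ∈ G` be of infinite order such that for every positive `n` the centralizer of `γ ^ n`
in `G` equals the cyclic subgroup generated by `γ`.  If the orbit of the coset `aH` under left
multiplication by `γ` on `G ⧸ H` is finite of cardinality `m`, then `a⁻¹ * γ ^ m * a` belongs to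
`H` and is primitive in `H` (it is not a proper power of an element of `H`). -/
theorem stmt3 {G : Type*} [Group G] (H : Subgroup G) (γ : G)
    (hord : ¬ IsOfFinOrder γ)
    (hcent : ∀ n : ℕ, 0 < n → Subgroup.centralizer {γ ^ n} = Subgroup.zpowers γ)
    (a : G) (m : ℕ)
    (hfin : (MulAction.orbit (Subgroup.zpowers γ) ((a : G ⧸ H))).Finite)
    (hcard : Nat.card (MulAction.orbit (Subgroup.zpowers γ) ((a : G ⧸ H))) = m) :
    a⁻¹ * γ ^ m * a ∈ H ∧
    ∀ δ ∈ H, ∀ k : ℕ, 0 < k → a⁻¹ * γ ^ m * a = δ ^ k → k = 1 := by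
  set p : G ⧸ H := (a : G ⧸ H) with hp
  -- the subgroup of ℤ of exponents stabilizing p
  set T : AddSubgroup ℤ :=
    { carrier := {n : ℤ | γ ^ n • p = p}
      zero_mem' := by simp
      add_mem' := by
        intro x y hx hy
        simp only [Set.mem_setOf_eq] at *
        rw [zpow_add, mul_smul, hy, hx]
      neg_mem' := by
        intro x hx
        simp only [Set.mem_setOf_eq] at *
        rw [← hx, ← mul_smul, zpow_neg, inv_mul_cancel, one_smul, hx] } with hTdef
  have hmemT : ∀ n : ℤ, n ∈ T ↔ a⁻¹ * γ ^ n * a ∈ H := by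
    intro n
    have h0 : (γ ^ n • p = p) ↔ ((γ ^ n * a : G) : G ⧸ H) = (a : G ⧸ H) := by
      rw [hp, MulAction.Quotient.smul_mk, smul_eq_mul]
    rw [show (n ∈ T ↔ γ ^ n • p = p) from Iff.rfl, h0, QuotientGroup.eq]
    constructor
    · intro h
      have := H.inv_mem h
      simpa [mul_assoc, mul_inv_rev] using this
    · intro h
      have := H.inv_mem h
      simpa [mul_assoc, mul_inv_rev] using this
  -- orbit ≃ ℤ ⧸ T
  have wd : ∀ n n' : ℤ, (QuotientAddGroup.leftRel T) n n' →
      γ ^ n • p = γ ^ n' • p := by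
    intro n n' h
    rw [QuotientAddGroup.leftRel_apply] at h
    have h' : γ ^ (-n + n') • p = p := h
    calc γ ^ n • p = γ ^ n • γ ^ (-n + n') • p := by rw [h']
    _ = γ ^ n' • p := by rw [← mul_smul, ← zpow_add]; ring_nf
  have e : (ℤ ⧸ T) ≃ MulAction.orbit (Subgroup.zpowers γ) p := by
    refine Equiv.ofBijective
      (fun q => Quotient.liftOn' q
        (fun n => ⟨γ ^ n • p,
          ⟨⟨γ ^ n, Subgroup.zpow_mem _ (Subgroup.mem_zpowers γ) n⟩, rfl⟩⟩)
        (fun n n' h => Subtype.ext (wd n n' h))) ⟨?_, ?_⟩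
    · intro q q'
      induction q using Quotient.inductionOn'
      induction q' using Quotient.inductionOn'
      rename_i n n'
      intro h
      have h1 : γ ^ n • p = γ ^ n' • p := Subtype.ext_iff.mp h
      apply Quotient.sound'
      rw [QuotientAddGroup.leftRel_apply]
      show γ ^ (-n + n') • p = p
      rw [zpow_add, mul_smul, ← h1, ← mul_smul, zpow_neg, inv_mul_cancel, one_smul]
    · rintro ⟨q, u, rfl⟩
      obtain ⟨n, hn⟩ := u.2
      have hn' : γ ^ n = (u : G) := hn
      refine ⟨Quotient.mk'' n, Subtype.ext ?_⟩
      show γ ^ n • p = u • p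
      rw [show u • p = (u : G) • p from rfl, hn']
  have hcardT : T.index = m := by
    rw [← hcard, AddSubgroup.index, Nat.card_congr e]
  -- T = zmultiples d
  obtain ⟨d, hd⟩ := Int.subgroup_cyclic T
  rw [← AddSubgroup.zmultiples_eq_closure] at hd
  have hdm : d.natAbs = m := by
    rw [← hcardT, hd, Int.index_zmultiples]
  have hm0 : 0 < m := by
    have hne : (MulAction.orbit (Subgroup.zpowers γ) p).Nonempty :=
      ⟨p, MulAction.mem_orbit_self p⟩
    haveI := hfin.to_subtype
    haveI := hne.to_subtype
    rw [← hcard]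
    exact Nat.card_pos
  have hdvd : ∀ n : ℤ, n ∈ T ↔ (m : ℤ) ∣ n := by
    intro n
    rw [hd, Int.mem_zmultiples_iff, ← Int.natAbs_dvd, hdm]
  have hmT : (m : ℤ) ∈ T := by
    rw [hdvd]
  have hmH : a⁻¹ * γ ^ m * a ∈ H := by
    have := (hmemT (m : ℤ)).mp hmT
    rwa [zpow_natCast] at this
  refine ⟨hmH, ?_⟩
  intro δ hδ k hk heq
  have hconj : ∀ l : ℕ, (a * δ * a⁻¹) ^ l = a * δ ^ l * a⁻¹ := by
    intro l
    induction l with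
    | zero => simp
    | succ n ih => rw [pow_succ, pow_succ, ih]; group
  have hpow : (a * δ * a⁻¹) ^ k = γ ^ m := by
    rw [hconj, ← heq]; group
  have hcomm : Commute (a * δ * a⁻¹) (γ ^ m) := by
    rw [← hpow]
    exact (Commute.refl _).pow_right k
  have hz : a * δ * a⁻¹ ∈ Subgroup.zpowers γ := by
    rw [← hcent m hm0]
    exact Subgroup.mem_centralizer_iff.mpr (by
      rintro g rfl
      exact hcomm.symm.eq)
  obtain ⟨j, hj⟩ := hz
  have hj' : γ ^ j = a * δ * a⁻¹ := hj
  have hjT : j ∈ T := by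
    rw [hmemT]
    have hδ' : a⁻¹ * γ ^ j * a = δ := by rw [hj']; group
    rwa [hδ']
  obtain ⟨t, ht⟩ := (hdvd j).mp hjT
  have hjk : γ ^ (j * (k : ℤ)) = γ ^ ((m : ℤ)) := by
    rw [zpow_mul, hj', zpow_natCast, zpow_natCast, hpow]
  have hjk' : j * (k : ℤ) = (m : ℤ) :=
    (injective_zpow_iff_not_isOfFinOrder.mpr hord) hjk
  have hm0' : (m : ℤ) ≠ 0 := by exact_mod_cast hm0.ne'
  have htk : t * (k : ℤ) = 1 := by
    have h2 : (m : ℤ) * (t * (k : ℤ)) = (m : ℤ) * 1 := by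
      linear_combination hjk' - (k : ℤ) * ht
    exact mul_left_cancel₀ hm0' h2
  have hk1 : (k : ℤ) ∣ 1 := ⟨t, by linarith⟩
  have : k ∣ 1 := by exact_mod_cast hk1
  exact Nat.dvd_one.mp this
end

section
/- Let G be a group, H a subgroup of G, γ ∈ G, and m a positive integer. Suppose η ∈ H is primitive in H and η = b⁻¹ γ^m b for some b ∈ G. Then the orbit of the coset bH under left multiplication by γ on G/H is finite of cardinality exactly m. -/
/-!
The orbit of `bH` under `⟨γ⟩` is a cycle whose length is the minimal period `d` of `bH` under
`γ`, and `γ ^ n • bH = bH` exactly when `b⁻¹ γ ^ n b ∈ H`. Hence `d ∣ m`, and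
`η = (b⁻¹ γ ^ d b) ^ (m / d)` with `b⁻¹ γ ^ d b ∈ H`, so primitivity of `η` forces `d = m`.
-/

open Function MulAction

namespace QuotientGroup

variable {G : Type*} [Group G] {H : Subgroup G}

theorem isPeriodicPt_smul_mk_iff {γ b : G} {n : ℕ} :
    IsPeriodicPt (γ • ·) n (b : G ⧸ H) ↔ b⁻¹ * γ ^ n * b ∈ H := by
  rw [IsPeriodicPt, IsFixedPt, smul_iterate]
  change ((γ ^ n * b : G) : G ⧸ H) = b ↔ _
  rw [eq_comm, QuotientGroup.eq, mul_assoc]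

theorem minimalPeriod_smul_mk_eq {γ b : G} {m : ℕ} (hm : 0 < m)
    (hmem : b⁻¹ * γ ^ m * b ∈ H)
    (hprim : ∀ δ ∈ H, ∀ k : ℕ, 0 < k → b⁻¹ * γ ^ m * b = δ ^ k → k = 1) :
    minimalPeriod (γ • ·) (b : G ⧸ H) = m := by
  have hper : IsPeriodicPt (γ • ·) m (b : G ⧸ H) := isPeriodicPt_smul_mk_iff.mpr hmem
  set d := minimalPeriod (γ • ·) (b : G ⧸ H)
  obtain ⟨k, hk⟩ : d ∣ m := hper.minimalPeriod_dvd
  have hδ : b⁻¹ * γ ^ d * b ∈ H :=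
    isPeriodicPt_smul_mk_iff.mp (isPeriodicPt_minimalPeriod _ _)
  have hpow : b⁻¹ * γ ^ m * b = (b⁻¹ * γ ^ d * b) ^ k := by
    simpa only [inv_inv, ← pow_mul, ← hk] using (conj_pow (a := b⁻¹) (b := γ ^ d) (i := k)).symm
  have hk1 : k = 1 := hprim _ hδ k (Nat.pos_of_mul_pos_left (hk ▸ hm)) hpow
  rw [hk, hk1, mul_one]

end QuotientGroup

/-- If `η ∈ H` is primitive in `H` and `η = b⁻¹ * γ ^ m * b` with `m` a positive integer, then
the orbit of the coset `bH` under left multiplication by `γ` on `G ⧸ H` is finite of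
cardinality exactly `m`. -/
theorem stmt4 {G : Type*} [Group G] (H : Subgroup G) (γ b : G) (m : ℕ) (hm : 0 < m)
    (η : G) (hη : η ∈ H)
    (hprim : ∀ δ ∈ H, ∀ k : ℕ, 0 < k → η = δ ^ k → k = 1)
    (heq : η = b⁻¹ * γ ^ m * b) :
    (MulAction.orbit (Subgroup.zpowers γ) ((b : G ⧸ H))).Finite ∧
    Nat.card (MulAction.orbit (Subgroup.zpowers γ) ((b : G ⧸ H))) = m := by
  subst heq
  -- not `rw`: the orbit above uses the instance `mulLeftCosetsCompSubtypeVal`, which matches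
  -- the action in `orbitZPowersEquiv` only up to unfolding
  have hcard : Nat.card (orbit (Subgroup.zpowers γ) (b : G ⧸ H)) = m :=
    (Nat.card_congr (orbitZPowersEquiv γ (b : G ⧸ H))).trans <| by
      rw [Nat.card_zmod, QuotientGroup.minimalPeriod_smul_mk_eq hm hη hprim]
  exact ⟨Set.finite_coe_iff.mp (Nat.finite_of_card_ne_zero (hcard ▸ hm.ne')), hcard⟩
end

section
/- Let G be a group and let H and K be relatively prime subgroups of G. Then for every γ ∈ G, the number of cosets in G/(H ∩ K) fixed by left multiplication by γ equals the product of the number of cosets in G/H fixed by γ and the number of cosets in G/K fixed by γ. -/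
/-!
When `HK = G`, the map `g(H ∩ K) ↦ (gH, gK)` is a `G`-equivariant bijection
`G ⧸ (H ∩ K) ≃ G ⧸ H × G ⧸ K`, so it matches the fixed points of `γ` on both sides, and a pair
is fixed exactly when both of its components are.
-/

open Function

theorem Nat.card_fixed_eq_of_bijective {M α β : Type*} [SMul M α] [SMul M β] {f : α → β}
    (hf : Bijective f) {m : M} (hsmul : ∀ x, f (m • x) = m • f x) :
    Nat.card {x : α // m • x = x} = Nat.card {y : β // m • y = y} :=
  Nat.card_congr <| (Equiv.ofBijective f hf).subtypeEquiv fun x => by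
    simp only [Equiv.ofBijective_apply, ← hsmul, hf.injective.eq_iff]

theorem Nat.card_fixed_prod {M α β : Type*} [SMul M α] [SMul M β] (m : M) :
    Nat.card {p : α × β // m • p = p} =
      Nat.card {a : α // m • a = a} * Nat.card {b : β // m • b = b} := by
  rw [← Nat.card_prod]
  exact Nat.card_congr <| (Equiv.subtypeEquivRight fun p => Prod.ext_iff).trans
    (Equiv.subtypeProdEquivProd (p := fun a : α => m • a = a) (q := fun b : β => m • b = b))

namespace Subgroup

variable {G : Type*} [Group G] (H K : Subgroup G)

def quotientInfToProd (q : G ⧸ (H ⊓ K)) : (G ⧸ H) × (G ⧸ K) :=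
  (quotientMapOfLE inf_le_left q, quotientMapOfLE inf_le_right q)

theorem quotientInfToProd_smul (g : G) (q : G ⧸ (H ⊓ K)) :
    quotientInfToProd H K (g • q) = g • quotientInfToProd H K q := by
  induction q using QuotientGroup.induction_on
  rfl

theorem quotientInfToProd_injective : Injective (quotientInfToProd H K) := by
  refine Quotient.ind₂' fun a b h => ?_
  simp only [quotientInfToProd, Prod.ext_iff] at h
  exact QuotientGroup.eq.mpr (mem_inf.mpr ⟨QuotientGroup.eq.mp h.1, QuotientGroup.eq.mp h.2⟩)

theorem quotientInfToProd_surjective (hHK : ∀ g : G, ∃ h ∈ H, ∃ k ∈ K, g = h * k) :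
    Surjective (quotientInfToProd H K) := by
  rintro ⟨x, y⟩
  induction x using QuotientGroup.induction_on with | H a => ?_
  induction y using QuotientGroup.induction_on with | H b => ?_
  obtain ⟨h, hh, k, hk, hab⟩ := hHK (a⁻¹ * b)
  -- `a * h` lies in `a H`, and equals `b k⁻¹`, so it also lies in `b K`.
  refine ⟨(a * h : G), Prod.ext (QuotientGroup.eq.mpr ?_) (QuotientGroup.eq.mpr ?_)⟩
  · simpa using inv_mem hh
  · have : (a * h)⁻¹ * b = k := by rw [mul_inv_rev, mul_assoc, hab]; group
    exact this.symm ▸ hk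

end Subgroup

theorem stmt7_general {G : Type*} [Group G] (H K : Subgroup G)
    (hHK : ∀ g : G, ∃ h ∈ H, ∃ k ∈ K, g = h * k) (γ : G) :
    Nat.card {x : G ⧸ (H ⊓ K) // γ • x = x} =
      Nat.card {x : G ⧸ H // γ • x = x} * Nat.card {x : G ⧸ K // γ • x = x} := by
  rw [Nat.card_fixed_eq_of_bijective
      ⟨H.quotientInfToProd_injective K, H.quotientInfToProd_surjective K hHK⟩
      (H.quotientInfToProd_smul K γ),
    Nat.card_fixed_prod]

/-- If `H` and `K` are relatively prime subgroups of `G`, then for every `γ ∈ G` the number of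
cosets of `G ⧸ (H ⊓ K)` fixed by left multiplication by `γ` is the product of the numbers of
fixed cosets in `G ⧸ H` and in `G ⧸ K`. -/
theorem stmt7 {G : Type*} [Group G] (H K : Subgroup G)
    (hfin : (H ⊓ K).FiniteIndex)
    (hHK : ∀ g : G, ∃ h ∈ H, ∃ k ∈ K, g = h * k) (γ : G) :
    Nat.card {x : G ⧸ (H ⊓ K) // γ • x = x} =
      Nat.card {x : G ⧸ H // γ • x = x} * Nat.card {x : G ⧸ K // γ • x = x} :=
  stmt7_general H K hHK γ
end

section
/- Let p be a prime and r a positive integer. The p^r + p^{r-1} matrices consisting of (1 0; m 1) for m = 0, 1, …, p^r − 1 together with (lp −1; 1 0) for l = 0, 1, …, p^{r-1} − 1 form a complete system of representatives for the left coset space SL₂(ℤ)/Γ₀(p^r): every element of SL₂(ℤ) lies in exactly one left coset gΓ₀(p^r) with g among these matrices. -/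
/-- The candidate coset representatives for `SL(2, ℤ) ⧸ Γ₀(p^r)`: the matrices
`(1 0; m 1)` for `0 ≤ m < p^r` and `(lp -1; 1 0)` for `0 ≤ l < p^(r-1)`. -/
def gamma0Reps (p r : ℕ) :
    (Fin (p ^ r) ⊕ Fin (p ^ (r - 1))) → Matrix.SpecialLinearGroup (Fin 2) ℤ
  | Sum.inl m => ⟨!![1, 0; (m : ℤ), 1], by norm_num [Matrix.det_fin_two_of]⟩
  | Sum.inr l => ⟨!![(l : ℤ) * p, -1; 1, 0], by norm_num [Matrix.det_fin_two_of]⟩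

lemma fin_cast_inj {n : ℕ} (m m' : Fin n) (h : ((m : ℕ) : ZMod n) = ((m' : ℕ) : ZMod n)) :
    m = m' :=
  Fin.ext (((ZMod.natCast_eq_natCast_iff _ _ _).1 h).eq_of_lt_of_lt m.2 m'.2)

lemma isUnit_zmod_of_not_dvd {p : ℕ} (hp : p.Prime) (k : ℕ) {x : ℤ}
    (hx : ¬ (p : ℤ) ∣ x) : IsUnit ((x : ZMod (p ^ k))) := by
  have h1 : IsCoprime ((p : ℤ) ^ k) x :=
    ((Nat.prime_iff_prime_int.1 hp).coprime_iff_not_dvd.2 hx).pow_left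
  obtain ⟨u, v, huv⟩ := h1
  refine IsUnit.of_mul_eq_one (v : ZMod (p ^ k)) ?_
  have : ((u * (p : ℤ) ^ k + v * x : ℤ) : ZMod (p ^ k)) = 1 := by rw [huv]; norm_cast
  push_cast at this
  rw [mul_comm]
  rwa [← Nat.cast_pow, ZMod.natCast_self, mul_zero, zero_add] at this

lemma key_exists_unique (n : ℕ) [NeZero n] (x y : ℤ) (hx : IsUnit ((x : ZMod n))) :
    ∃! m : Fin n, (n : ℤ) ∣ y - m * x := by
  obtain ⟨u, hu⟩ := hx
  have cond : ∀ m : Fin n, ((n : ℤ) ∣ y - m * x) ↔ ((y : ZMod n) = ((m : ℕ) : ZMod n) * x) := by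
    intro m
    rw [← ZMod.intCast_zmod_eq_zero_iff_dvd]
    push_cast
    rw [sub_eq_zero]
  simp only [cond]
  refine ⟨⟨((y : ZMod n) * ↑u⁻¹).val, ZMod.val_lt _⟩, ?_, ?_⟩
  · simp only [ZMod.natCast_val, ZMod.cast_id]
    rw [← hu, mul_assoc, Units.inv_mul, mul_one]
  · intro m' hm'
    apply fin_cast_inj
    simp only [ZMod.natCast_val, ZMod.cast_id]
    rw [hm', ← hu, mul_assoc, Units.mul_inv, mul_one]

/-- For `p` prime and `r ≥ 1`, the `p^r + p^(r-1)` matrices `(1 0; m 1)` (`0 ≤ m < p^r`) and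
`(lp -1; 1 0)` (`0 ≤ l < p^(r-1)`) form a complete system of representatives for the left coset
space `SL(2, ℤ) ⧸ Γ₀(p^r)`: every `A ∈ SL(2, ℤ)` lies in exactly one left coset `g·Γ₀(p^r)`
with `g` among these matrices. -/
theorem stmt10 (p r : ℕ) (hp : p.Prime) (hr : 0 < r) :
    ∀ A : Matrix.SpecialLinearGroup (Fin 2) ℤ,
      ∃! i : Fin (p ^ r) ⊕ Fin (p ^ (r - 1)),
        (gamma0Reps p r i)⁻¹ * A ∈ CongruenceSubgroup.Gamma0 (p ^ r) := by
  intro A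
  haveI : NeZero (p ^ r) := ⟨(pow_pos hp.pos r).ne'⟩
  haveI : NeZero (p ^ (r - 1)) := ⟨(pow_pos hp.pos _).ne'⟩
  set a := A.1 0 0 with ha
  set b := A.1 0 1 with hb
  set c := A.1 1 0 with hc
  set d := A.1 1 1 with hd
  have hdet : a * d - b * c = 1 := by
    have := A.2
    rwa [Matrix.det_fin_two] at this
  have hco : IsCoprime a c := ⟨d, -b, by ring_nf; linarith⟩
  have entry_inl : ∀ m : Fin (p ^ r),
      ((gamma0Reps p r (Sum.inl m))⁻¹ * A).1 1 0 = c - (m : ℤ) * a := by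
    intro m
    change ((_ : Matrix (Fin 2) (Fin 2) ℤ) * A.1) 1 0 = _
    rw [Matrix.SpecialLinearGroup.SL2_inv_expl, Matrix.mul_apply]
    simp [gamma0Reps, Matrix.SpecialLinearGroup.SL2_inv_expl, Matrix.mul_apply,
      Fin.sum_univ_two, ha, hc]
    ring
  have entry_inr : ∀ l : Fin (p ^ (r - 1)),
      ((gamma0Reps p r (Sum.inr l))⁻¹ * A).1 1 0 = (l : ℤ) * p * c - a := by
    intro l
    change ((_ : Matrix (Fin 2) (Fin 2) ℤ) * A.1) 1 0 = _
    rw [Matrix.SpecialLinearGroup.SL2_inv_expl, Matrix.mul_apply]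
    simp [gamma0Reps, Matrix.SpecialLinearGroup.SL2_inv_expl, Matrix.mul_apply,
      Fin.sum_univ_two, ha, hc]
    ring
  have cond_inl : ∀ m : Fin (p ^ r),
      ((gamma0Reps p r (Sum.inl m))⁻¹ * A ∈ CongruenceSubgroup.Gamma0 (p ^ r)) ↔
        ((p : ℤ) ^ r ∣ c - (m : ℤ) * a) := by
    intro m
    rw [CongruenceSubgroup.Gamma0_mem]
    rw [show (((gamma0Reps p r (Sum.inl m))⁻¹ * A : Matrix.SpecialLinearGroup (Fin 2) ℤ) :
        Matrix (Fin 2) (Fin 2) ℤ) 1 0 = c - (m : ℤ) * a from entry_inl m]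
    rw [ZMod.intCast_zmod_eq_zero_iff_dvd]
    push_cast
    rfl
  have cond_inr : ∀ l : Fin (p ^ (r - 1)),
      ((gamma0Reps p r (Sum.inr l))⁻¹ * A ∈ CongruenceSubgroup.Gamma0 (p ^ r)) ↔
        ((p : ℤ) ^ r ∣ (l : ℤ) * p * c - a) := by
    intro l
    rw [CongruenceSubgroup.Gamma0_mem]
    rw [show (((gamma0Reps p r (Sum.inr l))⁻¹ * A : Matrix.SpecialLinearGroup (Fin 2) ℤ) :
        Matrix (Fin 2) (Fin 2) ℤ) 1 0 = (l : ℤ) * p * c - a from entry_inr l]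
    rw [ZMod.intCast_zmod_eq_zero_iff_dvd]
    push_cast
    rfl
  have hpdvd : (p : ℤ) ∣ (p : ℤ) ^ r := dvd_pow_self _ hr.ne'
  by_cases hpa : (p : ℤ) ∣ a
  · -- a divisible by p : use an inr representative
    obtain ⟨a', haa⟩ := hpa
    have hpc : ¬ (p : ℤ) ∣ c := by
      intro hpc
      exact (Nat.prime_iff_prime_int.1 hp).not_unit (hco.isUnit_of_dvd' ⟨a', haa⟩ hpc)
    have hcu : IsUnit ((c : ZMod (p ^ (r - 1)))) := isUnit_zmod_of_not_dvd hp _ hpc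
    obtain ⟨l, hl, hlu⟩ := key_exists_unique (p ^ (r - 1)) c a' hcu
    push_cast at hl
    have hpow : (p : ℤ) ^ r = (p : ℤ) * (p : ℤ) ^ (r - 1) := by
      rw [← pow_succ']
      congr 1
      omega
    have cond_inr' : ∀ l' : Fin (p ^ (r - 1)),
        ((p : ℤ) ^ r ∣ (l' : ℤ) * p * c - a) ↔ ((p : ℤ) ^ (r - 1) : ℤ) ∣ a' - (l' : ℤ) * c := by
      intro l'
      rw [haa, hpow, show (l' : ℤ) * p * c - p * a' = p * ((l' : ℤ) * c - a') by ring,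
        mul_dvd_mul_iff_left (by exact_mod_cast hp.pos.ne' : (p : ℤ) ≠ 0), dvd_sub_comm]
    refine ⟨Sum.inr l, ?_, ?_⟩
    · exact (cond_inr l).2 ((cond_inr' l).2 (by exact_mod_cast hl))
    · rintro (m' | l') h
      · exfalso
        rw [cond_inl] at h
        have h1 : (p : ℤ) ∣ c - (m' : ℤ) * a := dvd_trans hpdvd h
        have h2 : (p : ℤ) ∣ (m' : ℤ) * a := Dvd.dvd.mul_left ⟨a', haa⟩ _
        exact hpc (by have := dvd_add h1 h2; simpa using this)
      · rw [cond_inr, cond_inr' l'] at h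
        exact congrArg Sum.inr (hlu l' (by exact_mod_cast h))
  · -- a not divisible by p : use an inl representative
    have hau : IsUnit ((a : ZMod (p ^ r))) := isUnit_zmod_of_not_dvd hp _ hpa
    obtain ⟨m, hm, hmu⟩ := key_exists_unique (p ^ r) a c hau
    push_cast at hm
    refine ⟨Sum.inl m, ?_, ?_⟩
    · exact (cond_inl m).2 (by exact_mod_cast hm)
    · rintro (m' | l') h
      · rw [cond_inl] at h
        exact congrArg Sum.inl (hmu m' (by exact_mod_cast h))
      · exfalso
        rw [cond_inr] at h
        have h1 : (p : ℤ) ∣ (l' : ℤ) * p * c - a := dvd_trans hpdvd h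
        have h2 : (p : ℤ) ∣ (l' : ℤ) * p * c := ⟨(l' : ℤ) * c, by ring⟩
        exact hpa (by have := dvd_sub h2 h1; simpa using this)
end

section
/- Let p be a prime, r a positive integer, and γ = (γ₁₁ γ₁₂; γ₂₁ γ₂₂) ∈ SL₂(ℤ). Then the number of cosets in SL₂(ℤ)/Γ₀(p^r) fixed by left multiplication by γ equals #{m ∈ ℤ/p^rℤ : γ₁₂m² + (γ₁₁ − γ₂₂)m − γ₂₁ ≡ 0 mod p^r} + #{l ∈ ℤ/p^{r-1}ℤ : γ₂₁p²l² + p(γ₁₁ − γ₂₂)l − γ₁₂ ≡ 0 mod p^r}. -/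
/-!
The coset `g Γ₀(N)` only depends on the first column `(a, c)` of `g` up to units mod `N`: indeed
`g⁻¹ h ∈ Γ₀(N)` says that the lower-left entry `a c' - c a'` of `g⁻¹ h` vanishes mod `N`. Hence
`γ` fixes `g Γ₀(N)` iff `(a, c)` is an eigenvector of `γ` mod `N`, i.e.
`γ₂₁ a² + (γ₂₂ - γ₁₁) a c - γ₁₂ c² ≡ 0 mod N`. For `N = p^r` every such column is equivalent to
exactly one of `(1, m)` with `m ∈ ℤ/p^r` (when `p ∤ a`) or `(-p l, 1)` with `l ∈ ℤ/p^(r-1)`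
(when `p ∣ a`, so that `c` is a unit), and evaluating the quadratic form at these representatives
gives the two counts.
-/

open Matrix MatrixGroups CongruenceSubgroup ModularGroup

namespace Gamma0Coset

lemma mk_eq_mk_iff_dvd {N : ℕ} {g h : SL(2, ℤ)} :
    (g : SL(2, ℤ) ⧸ Gamma0 N) = h ↔ (N : ℤ) ∣ g 0 0 * h 1 0 - g 1 0 * h 0 0 := by
  rw [QuotientGroup.eq, Gamma0_mem, ZMod.intCast_zmod_eq_zero_iff_dvd]
  simp [adjugate_fin_two, mul_apply, Fin.sum_univ_two]
  ring_nf

lemma smul_mk_eq_mk_iff_dvd {N : ℕ} {γ g : SL(2, ℤ)} :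
    γ • (g : SL(2, ℤ) ⧸ Gamma0 N) = g ↔
      (N : ℤ) ∣ γ 1 0 * g 0 0 ^ 2 + (γ 1 1 - γ 0 0) * g 0 0 * g 1 0 - γ 0 1 * g 1 0 ^ 2 := by
  change ((γ * g : SL(2, ℤ)) : SL(2, ℤ) ⧸ Gamma0 N) = g ↔ _
  rw [eq_comm, mk_eq_mk_iff_dvd]
  simp [mul_apply, Fin.sum_univ_two]
  ring_nf

def lowerUnipotent (n : ℤ) : SL(2, ℤ) :=
  ⟨!![1, 0; n, 1], by simp [det_fin_two_of]⟩

@[simp] lemma lowerUnipotent_apply_zero_zero (n : ℤ) : lowerUnipotent n 0 0 = 1 := rfl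
@[simp] lemma lowerUnipotent_apply_one_zero (n : ℤ) : lowerUnipotent n 1 0 = n := rfl

@[simp] lemma T_zpow_mul_S_apply_zero_zero (n : ℤ) : (T ^ n * S) 0 0 = n := by
  simp [coe_T_zpow, coe_S]

@[simp] lemma T_zpow_mul_S_apply_one_zero (n : ℤ) : (T ^ n * S) 1 0 = 1 := by
  simp [coe_S]

variable {N : ℕ}

lemma mk_lowerUnipotent_eq_mk_iff {n : ℤ} {g : SL(2, ℤ)} :
    (lowerUnipotent n : SL(2, ℤ) ⧸ Gamma0 N) = g ↔ (N : ℤ) ∣ g 1 0 - n * g 0 0 := by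
  simp [mk_eq_mk_iff_dvd]

lemma mk_T_zpow_mul_S_eq_mk_iff {n : ℤ} {g : SL(2, ℤ)} :
    ((T ^ n * S : SL(2, ℤ)) : SL(2, ℤ) ⧸ Gamma0 N) = g ↔ (N : ℤ) ∣ n * g 1 0 - g 0 0 := by
  simp [mk_eq_mk_iff_dvd]

lemma mk_lowerUnipotent_inj {n n' : ℤ} :
    (lowerUnipotent n : SL(2, ℤ) ⧸ Gamma0 N) = lowerUnipotent n' ↔ (n : ZMod N) = n' := by
  simp [mk_lowerUnipotent_eq_mk_iff, ZMod.intCast_eq_intCast_iff_dvd_sub]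

lemma mk_T_zpow_mul_S_inj {n n' : ℤ} :
    ((T ^ n * S : SL(2, ℤ)) : SL(2, ℤ) ⧸ Gamma0 N) = (T ^ n' * S : SL(2, ℤ)) ↔
      (n : ZMod N) = n' := by
  rw [mk_T_zpow_mul_S_eq_mk_iff, ZMod.intCast_eq_intCast_iff_dvd_sub, ← dvd_neg]
  simp

lemma mk_lowerUnipotent_ne_mk_T_zpow_mul_S {d n n' : ℤ} (hd : ¬IsUnit d) (hdN : d ∣ N)
    (hdn' : d ∣ n') :
    (lowerUnipotent n : SL(2, ℤ) ⧸ Gamma0 N) ≠ (T ^ n' * S : SL(2, ℤ)) := by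
  intro h
  rw [mk_lowerUnipotent_eq_mk_iff] at h
  simp only [T_zpow_mul_S_apply_one_zero, T_zpow_mul_S_apply_zero_zero] at h
  refine hd (isUnit_of_dvd_one ?_)
  simpa using dvd_add (hdN.trans h) (hdn'.mul_left n)

lemma exists_mk_lowerUnipotent_eq {g : SL(2, ℤ)} (hg : IsCoprime (g 0 0) N) :
    ∃ n : ℤ, (lowerUnipotent n : SL(2, ℤ) ⧸ Gamma0 N) = g := by
  obtain ⟨u, v, huv⟩ := hg
  exact ⟨g 1 0 * u, mk_lowerUnipotent_eq_mk_iff.2 ⟨g 1 0 * v, by linear_combination -g 1 0 * huv⟩⟩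

lemma exists_mk_T_zpow_mul_S_eq {g : SL(2, ℤ)} (hg : IsCoprime (g 1 0) N) :
    ∃ u : ℤ, ((T ^ (g 0 0 * u) * S : SL(2, ℤ)) : SL(2, ℤ) ⧸ Gamma0 N) = g := by
  obtain ⟨u, v, huv⟩ := hg
  exact ⟨u, mk_T_zpow_mul_S_eq_mk_iff.2 ⟨-(g 0 0 * v), by linear_combination g 0 0 * huv⟩⟩

lemma smul_mk_lowerUnipotent_eq_self_iff {γ : SL(2, ℤ)} {n : ℤ} :
    γ • (lowerUnipotent n : SL(2, ℤ) ⧸ Gamma0 N) = lowerUnipotent n ↔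
      (N : ℤ) ∣ γ 0 1 * n ^ 2 + (γ 0 0 - γ 1 1) * n - γ 1 0 := by
  rw [smul_mk_eq_mk_iff_dvd, ← dvd_neg]
  simp only [lowerUnipotent_apply_zero_zero, lowerUnipotent_apply_one_zero]
  ring_nf

lemma smul_mk_T_zpow_mul_S_eq_self_iff {γ : SL(2, ℤ)} {n : ℤ} :
    γ • ((T ^ n * S : SL(2, ℤ)) : SL(2, ℤ) ⧸ Gamma0 N) = (T ^ n * S : SL(2, ℤ)) ↔
      (N : ℤ) ∣ γ 1 0 * n ^ 2 + (γ 1 1 - γ 0 0) * n - γ 0 1 := by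
  rw [smul_mk_eq_mk_iff_dvd]
  simp only [T_zpow_mul_S_apply_zero_zero, T_zpow_mul_S_apply_one_zero]
  ring_nf

def cosetRep (p r : ℕ) : ZMod (p ^ r) ⊕ ZMod (p ^ (r - 1)) → SL(2, ℤ) ⧸ Gamma0 (p ^ r) :=
  Sum.elim (fun m => (lowerUnipotent m.val : SL(2, ℤ)))
    (fun l => (T ^ (-(p * l.val : ℤ)) * S : SL(2, ℤ)))

variable {p r : ℕ}

lemma cosetRep_injective (hp : 1 < p) (hr : 0 < r) : (cosetRep p r).Injective := by
  have : NeZero p := ⟨by omega⟩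
  have hpow : ((p ^ r : ℕ) : ℤ) = p * (p ^ (r - 1) : ℕ) := by
    push_cast; rw [← pow_succ', Nat.sub_add_cancel hr]
  have hne (m : ZMod (p ^ r)) (l : ZMod (p ^ (r - 1))) :
      cosetRep p r (.inl m) ≠ cosetRep p r (.inr l) :=
    mk_lowerUnipotent_ne_mk_T_zpow_mul_S (d := p) (by simp [Int.isUnit_iff]; omega)
      (hpow ▸ dvd_mul_right _ _) (by simp)
  rintro (m | l) (m' | l') h
  · simpa [cosetRep, mk_lowerUnipotent_inj] using h
  · exact absurd h (hne m l')
  · exact absurd h.symm (hne m' l)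
  · rw [cosetRep, Sum.elim_inr, Sum.elim_inr, mk_T_zpow_mul_S_inj,
      ZMod.intCast_eq_intCast_iff_dvd_sub, hpow] at h
    have : ((p ^ (r - 1) : ℕ) : ℤ) ∣ l.val - l'.val := by
      rw [← mul_dvd_mul_iff_left (by positivity : (p : ℤ) ≠ 0)]
      rwa [show -(p * l'.val : ℤ) - -(p * l.val) = p * (l.val - l'.val) by ring] at h
    congr 1
    simpa using ((ZMod.intCast_eq_intCast_iff_dvd_sub _ _ _).2 this).symm

lemma cosetRep_inl_intCast [NeZero p] (x : ℤ) :
    cosetRep p r (.inl x) = (lowerUnipotent x : SL(2, ℤ)) := by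
  simp [cosetRep, mk_lowerUnipotent_inj]

lemma cosetRep_inr_intCast [NeZero p] (x : ℤ) :
    cosetRep p r (.inr x) = (T ^ (-(p * x)) * S : SL(2, ℤ)) := by
  have hval : ((p ^ (r - 1) : ℕ) : ℤ) ∣ (x : ZMod (p ^ (r - 1))).val - x := by
    rw [ZMod.val_intCast]
    exact (Int.mod_modEq x _).symm.dvd
  have hpow : ((p ^ r : ℕ) : ℤ) ∣ p * (p ^ (r - 1) : ℕ) := by
    push_cast
    rw [← pow_succ']
    exact pow_dvd_pow _ (by omega)
  rw [cosetRep, Sum.elim_inr, mk_T_zpow_mul_S_inj, ZMod.intCast_eq_intCast_iff_dvd_sub]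
  rw [show -(p * x) - -(p * (x : ZMod (p ^ (r - 1))).val : ℤ) =
    p * ((x : ZMod (p ^ (r - 1))).val - x) by ring]
  exact hpow.trans (mul_dvd_mul_left _ hval)

lemma cosetRep_surjective (hp : p.Prime) : (cosetRep p r).Surjective := by
  have : NeZero p := ⟨hp.ne_zero⟩
  have hpZ : Prime (p : ℤ) := Nat.prime_iff_prime_int.mp hp
  have hcop {z : ℤ} (hz : ¬(p : ℤ) ∣ z) : IsCoprime z ((p ^ r : ℕ) : ℤ) := by
    push_cast
    exact (hpZ.coprime_iff_not_dvd.2 hz).symm.pow_right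
  intro x
  obtain ⟨g, rfl⟩ := QuotientGroup.mk_surjective x
  have hg : IsCoprime (g 0 0) (g 1 0) := ⟨g 1 1, -g 0 1, by
    linear_combination (det_fin_two (g : Matrix (Fin 2) (Fin 2) ℤ)).symm.trans g.det_coe⟩
  by_cases ha : (p : ℤ) ∣ g 0 0
  · have hc : ¬(p : ℤ) ∣ g 1 0 := fun hc => hpZ.not_isUnit (hg.isUnit_of_dvd' ha hc)
    obtain ⟨u, hu⟩ := exists_mk_T_zpow_mul_S_eq (hcop hc)
    obtain ⟨a, ha⟩ := ha
    refine ⟨.inr ((-(a * u) : ℤ) : ZMod (p ^ (r - 1))), (cosetRep_inr_intCast _).trans ?_⟩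
    rwa [show -(p * -(a * u)) = g 0 0 * u by rw [ha]; ring]
  · obtain ⟨n, hn⟩ := exists_mk_lowerUnipotent_eq (hcop ha)
    exact ⟨.inl (n : ZMod (p ^ r)), (cosetRep_inl_intCast n).trans hn⟩

lemma cosetRep_bijective (hp : p.Prime) (hr : 0 < r) : (cosetRep p r).Bijective :=
  ⟨cosetRep_injective hp.one_lt hr, cosetRep_surjective hp⟩

lemma smul_cosetRep_inl_eq_self_iff [NeZero p] (γ : SL(2, ℤ)) (m : ZMod (p ^ r)) :
    γ • cosetRep p r (.inl m) = cosetRep p r (.inl m) ↔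
      (γ 0 1 : ZMod (p ^ r)) * m ^ 2 + ((γ 0 0 : ZMod (p ^ r)) - γ 1 1) * m - γ 1 0 = 0 := by
  rw [cosetRep, Sum.elim_inl, smul_mk_lowerUnipotent_eq_self_iff,
    ← ZMod.intCast_zmod_eq_zero_iff_dvd]
  push_cast
  simp

lemma smul_cosetRep_inr_eq_self_iff (γ : SL(2, ℤ)) (l : ZMod (p ^ (r - 1))) :
    γ • cosetRep p r (.inr l) = cosetRep p r (.inr l) ↔
      (p ^ r : ℤ) ∣ γ 1 0 * p ^ 2 * l.val ^ 2 + p * (γ 0 0 - γ 1 1) * l.val - γ 0 1 := by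
  rw [cosetRep, Sum.elim_inr, smul_mk_T_zpow_mul_S_eq_self_iff, Nat.cast_pow]
  ring_nf

end Gamma0Coset

open Gamma0Coset in
/-- For `p` prime, `r ≥ 1` and `γ ∈ SL(2, ℤ)`, the number of cosets of
`SL(2, ℤ) ⧸ Γ₀(p^r)` fixed by left multiplication by `γ` equals
`#{m ∈ ℤ/p^rℤ : γ₁₂ m² + (γ₁₁ − γ₂₂) m − γ₂₁ = 0}`
plus `#{l ∈ ℤ/p^(r-1)ℤ : γ₂₁ p² l² + p (γ₁₁ − γ₂₂) l − γ₁₂ ≡ 0 mod p^r}`. -/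
theorem stmt12 (p r : ℕ) (hp : p.Prime) (hr : 0 < r)
    (γ : Matrix.SpecialLinearGroup (Fin 2) ℤ) :
    Nat.card {x : Matrix.SpecialLinearGroup (Fin 2) ℤ ⧸ CongruenceSubgroup.Gamma0 (p ^ r) //
        γ • x = x} =
      Nat.card {m : ZMod (p ^ r) //
          (γ.1 0 1 : ZMod (p ^ r)) * m ^ 2
            + ((γ.1 0 0 : ZMod (p ^ r)) - (γ.1 1 1 : ZMod (p ^ r))) * m
            - (γ.1 1 0 : ZMod (p ^ r)) = 0} +
      Nat.card {l : ZMod (p ^ (r - 1)) //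
          (p ^ r : ℤ) ∣ γ.1 1 0 * (p : ℤ) ^ 2 * (l.val : ℤ) ^ 2
            + (p : ℤ) * (γ.1 0 0 - γ.1 1 1) * (l.val : ℤ) - γ.1 0 1} := by
  have : NeZero p := ⟨hp.ne_zero⟩
  let e := Equiv.ofBijective _ (cosetRep_bijective hp hr)
  rw [← Nat.card_congr (e.subtypeEquiv fun s => Iff.rfl), Nat.card_congr Equiv.subtypeSum,
    Nat.card_sum]
  exact congrArg₂ (· + ·)
    (Nat.card_congr (Equiv.subtypeEquivRight (smul_cosetRep_inl_eq_self_iff γ)))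
    (Nat.card_congr (Equiv.subtypeEquivRight (smul_cosetRep_inr_eq_self_iff γ)))
end

section
/- Let G be a group with subgroups H and K such that H is a normal subgroup of K, K ≤ G, and both [G : H] and [G : K] are finite. Then for every γ ∈ G, the number of cosets gH ∈ G/H fixed by left multiplication by γ equals [K : H] times the number of cosets gK ∈ G/K such that g⁻¹γg ∈ H. -/
/-! The projection `G ⧸ H → G ⧸ K` has all fibres in bijection with `K ⧸ H`, and `gH` is fixed
by `γ` exactly when `g⁻¹ γ g ∈ H`. Since `K` normalizes `H`, this condition depends only on
`gK`, so the fixed cosets of `G ⧸ H` are the full fibres over the cosets `gK` satisfying it. -/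

namespace Subgroup

variable {G : Type*} [Group G]

theorem smul_mk_eq_self_iff (H : Subgroup G) (γ g : G) :
    γ • (g : G ⧸ H) = g ↔ g⁻¹ * γ * g ∈ H := by
  rw [MulAction.Quotient.smul_coe, smul_eq_mul, QuotientGroup.eq, ← inv_mem_iff]
  simp only [mul_inv_rev, inv_inv, mul_assoc]

theorem conj_mem_iff_of_mk_eq {H K : Subgroup G} (hK : K ≤ normalizer H) (γ : G) {g g' : G}
    (hg : (g : G ⧸ K) = g') : g⁻¹ * γ * g ∈ H ↔ g'⁻¹ * γ * g' ∈ H := by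
  obtain ⟨k, rfl⟩ : ∃ k, g' = g * k := ⟨g⁻¹ * g', by group⟩
  have hk : k ∈ K := by simpa using QuotientGroup.eq.mp hg
  rw [mem_normalizer_iff''.mp (hK hk)]
  group

theorem exists_mk_eq_conj_mem_iff {H K : Subgroup G} (hK : K ≤ normalizer H) (γ g : G) :
    (∃ g' : G, (g' : G ⧸ K) = g ∧ g'⁻¹ * γ * g' ∈ H) ↔ g⁻¹ * γ * g ∈ H :=
  ⟨fun ⟨_, hg', hmem⟩ => (conj_mem_iff_of_mk_eq hK γ hg').mp hmem, fun h => ⟨g, rfl, h⟩⟩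

theorem card_subtype_quotientMapOfLE {H K : Subgroup G} (hHK : H ≤ K) (p : G ⧸ K → Prop) :
    Nat.card {x : G ⧸ H // p (quotientMapOfLE hHK x)} = H.relIndex K * Nat.card {y // p y} := by
  let e := quotientEquivProdOfLE hHK
  have he : ∀ x, (e x).1 = quotientMapOfLE hHK x := fun x => Quotient.inductionOn' x fun _ => rfl
  calc Nat.card {x : G ⧸ H // p (quotientMapOfLE hHK x)}
      = Nat.card {z : (G ⧸ K) × (K ⧸ H.subgroupOf K) // p z.1} :=
        Nat.card_congr (e.subtypeEquiv fun x => by rw [he])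
    _ = Nat.card ({y // p y} × (K ⧸ H.subgroupOf K)) :=
        Nat.card_congr Equiv.prodSubtypeFstEquivSubtypeProd
    _ = H.relIndex K * Nat.card {y // p y} := by
        rw [Nat.card_prod, mul_comm, relIndex, index]

end Subgroup

theorem stmt13_general {G : Type*} [Group G] (H K : Subgroup G) (hHK : H ≤ K)
    (hnorm : (H.subgroupOf K).Normal) (γ : G) :
    Nat.card {x : G ⧸ H // γ • x = x} =
      H.relIndex K *
        Nat.card {x : G ⧸ K // ∃ g : G, (g : G ⧸ K) = x ∧ g⁻¹ * γ * g ∈ H} := by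
  have hK : K ≤ Subgroup.normalizer H := (Subgroup.normal_subgroupOf_iff_le_normalizer hHK).mp hnorm
  rw [← Subgroup.card_subtype_quotientMapOfLE hHK]
  refine Nat.card_congr (Equiv.subtypeEquivRight fun x => Quotient.inductionOn' x fun g => ?_)
  exact (H.smul_mk_eq_self_iff γ g).trans (Subgroup.exists_mk_eq_conj_mem_iff hK γ g).symm

/-- If `H ≤ K ≤ G`, `H` is normal in `K`, and both `H` and `K` have finite index in `G`, then
for every `γ ∈ G` the number of cosets of `G ⧸ H` fixed by left multiplication by `γ` equals
`[K : H]` times the number of cosets `gK ∈ G ⧸ K` with `g⁻¹ γ g ∈ H`. -/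
theorem stmt13 {G : Type*} [Group G] (H K : Subgroup G) (hHK : H ≤ K)
    (hnorm : (H.subgroupOf K).Normal) (hH : H.FiniteIndex) (hK : K.FiniteIndex) (γ : G) :
    Nat.card {x : G ⧸ H // γ • x = x} =
      H.relIndex K *
        Nat.card {x : G ⧸ K // ∃ g : G, (g : G ⧸ K) = x ∧ g⁻¹ * γ * g ∈ H} :=
  stmt13_general H K hHK hnorm γ
end

section
/- Let p be an odd prime and let γ ∈ SL₂(𝔽_p) be such that (tr γ)² − 4 is a nonzero non-square in 𝔽_p (so the characteristic polynomial of γ is irreducible over 𝔽_p). Let l be the order of the image of γ in PSL₂(𝔽_p) = SL₂(𝔽_p)/{±I}, so that l divides (p+1)/2 and l > 1. Then the action of γ on the projective line ℙ¹(𝔽_p) has no fixed points and every orbit has cardinality exactly l; in particular the cycle type of γ on ℙ¹(𝔽_p) is (l^{(p+1)/l}). -/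
/-!
Let `t = tr γ`. Since `t² - 4` is not a square, every nonzero element `a + bγ` of `𝔽_p[γ]` has
nonzero determinant `a² + abt + b²`, so `𝔽_p[γ]` is a field. Hence a power `γ^k` with an
eigenvector in `𝔽_p²` — equivalently, one fixing a point of `ℙ¹(𝔽_p)` — is scalar, i.e. central,
so every point of `ℙ¹` has period exactly `l` under `γ`. Frobenius acts on `𝔽_p[γ]` as
`γ ↦ t - γ = γ⁻¹`, so `γ^(p+1) = 1` and `γ^((p+1)/2)` is a square root of `1` in the field
`𝔽_p[γ]`, hence `±1`; thus `l ∣ (p+1)/2`. Counting the `p + 1` points gives `(p+1)/l` orbits.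
-/

open Matrix Polynomial

namespace Matrix

section CommRing

variable {R : Type*} [CommRing R] (M : Matrix (Fin 2) (Fin 2) R)

lemma sq_eq_trace_smul_sub_det_smul : M ^ 2 = M.trace • M - M.det • 1 := by
  ext i j
  fin_cases i <;> fin_cases j <;> simp [sq, mul_apply, trace_fin_two, det_fin_two] <;> ring

lemma det_smul_one_add_smul (a b : R) :
    (a • 1 + b • M).det = a ^ 2 + a * b * M.trace + b ^ 2 * M.det := by
  simp [det_fin_two, trace_fin_two]
  ring

lemma discr_smul_one (c : R) : (c • 1 : Matrix (Fin 2) (Fin 2) R).discr = 0 := by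
  simp [discr_fin_two]
  ring

lemma pow_mem_span_one_self (k : ℕ) : M ^ k ∈ Submodule.span R {1, M} := by
  induction k with
  | zero => exact Submodule.subset_span (by simp)
  | succ k ih =>
    obtain ⟨a, b, hab⟩ := Submodule.mem_span_pair.mp ih
    refine Submodule.mem_span_pair.mpr ⟨-b * M.det, a + b * M.trace, ?_⟩
    rw [pow_succ, ← hab, add_mul, smul_mul_assoc, smul_mul_assoc, one_mul, ← sq,
      sq_eq_trace_smul_sub_det_smul]
    module

end CommRing

section Field

variable {K : Type*} [Field K] {M X : Matrix (Fin 2) (Fin 2) K}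

lemma eq_zero_of_mem_span_of_det_eq_zero (hM : ¬ IsSquare M.discr)
    (hX : X ∈ Submodule.span K {1, M}) (hdet : X.det = 0) : X = 0 := by
  obtain ⟨a, b, rfl⟩ := Submodule.mem_span_pair.mp hX
  rw [det_smul_one_add_smul] at hdet
  obtain rfl : b = 0 := by
    by_contra hb
    refine hM ⟨(2 * a + b * M.trace) / b, ?_⟩
    rw [discr_fin_two]
    field_simp
    linear_combination (-4 : K) * hdet
  obtain rfl : a = 0 := by simpa using hdet
  simp

lemma eq_smul_one_of_mem_span_of_det_sub_eq_zero (hM : ¬ IsSquare M.discr)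
    (hX : X ∈ Submodule.span K {1, M}) {c : K} (h : (X - c • 1).det = 0) : X = c • 1 :=
  sub_eq_zero.mp <| eq_zero_of_mem_span_of_det_eq_zero hM
    (sub_mem hX (Submodule.smul_mem _ c (Submodule.subset_span (by simp)))) h

lemma eq_smul_one_of_mem_span_of_mulVec_eq_smul (hM : ¬ IsSquare M.discr)
    (hX : X ∈ Submodule.span K {1, M}) {v : Fin 2 → K} (hv : v ≠ 0) {c : K}
    (h : X *ᵥ v = c • v) : X = c • 1 :=
  eq_smul_one_of_mem_span_of_det_sub_eq_zero hM hX <| exists_mulVec_eq_zero_iff.mp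
    ⟨v, hv, by rw [sub_mulVec, h, smul_mulVec, one_mulVec, sub_self]⟩

lemma exists_eq_smul_one_of_mem_span_of_mul_self_eq_one (hM : ¬ IsSquare M.discr)
    (hX : X ∈ Submodule.span K {1, M}) (h : X * X = 1) : ∃ c : K, X = c • 1 := by
  have : (X - (-1 : K) • 1).det * (X - (1 : K) • 1).det = 0 := by
    rw [← det_mul, neg_smul, one_smul, sub_neg_eq_add, ← mul_self_sub_one, h, sub_self, det_zero]
  rcases mul_eq_zero.mp this with h | h <;>
    exact ⟨_, eq_smul_one_of_mem_span_of_det_sub_eq_zero hM hX h⟩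

end Field

section FiniteField

variable {F : Type*} [Field F] [Fintype F]

lemma _root_.Polynomial.aeval_pow_card {A : Type*} [Semiring A] [Algebra F A] (x : A)
    (f : F[X]) :
    aeval x f ^ Fintype.card F = aeval (x ^ Fintype.card F) f := by
  rw [← map_pow, ← FiniteField.expand_card, expand_aeval]

/-- `N = 2M - tr M` squares to the non-square `discr M`, so `N ^ q = -N` by Euler's criterion,
while `N ^ q = 2M ^ q - tr M` by Frobenius. -/
lemma pow_card_eq_trace_smul_one_sub (hF : ringChar F ≠ 2) {M : Matrix (Fin 2) (Fin 2) F}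
    (hM : ¬ IsSquare M.discr) : M ^ Fintype.card F = M.trace • 1 - M := by
  set q := Fintype.card F
  set N : Matrix (Fin 2) (Fin 2) F := (2 : F) • M - M.trace • 1 with hN
  have hN_sq : N ^ 2 = M.discr • 1 := by
    have hM2 := sq_eq_trace_smul_sub_det_smul M
    rw [sq] at hM2 ⊢
    rw [hN, discr_fin_two, sub_mul, mul_sub, mul_sub, smul_mul_smul_comm, hM2]
    simp only [smul_mul_assoc, mul_smul_comm, one_mul, mul_one]
    module
  have hdiscr_ne : M.discr ≠ 0 := fun h => hM (h ▸ IsSquare.zero)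
  have hEuler : M.discr ^ (q / 2) = -1 :=
    (FiniteField.pow_dichotomy hF hdiscr_ne).resolve_left
      fun h => hM ((FiniteField.isSquare_iff hF hdiscr_ne).mpr h)
  have hq : 2 * (q / 2) + 1 = q := by
    have := FiniteField.odd_card_of_char_ne_two hF; omega
  have hNq : N ^ q = -N := by
    rw [← hq, pow_succ, pow_mul, hN_sq, _root_.smul_pow, hEuler, one_pow, neg_one_smul,
      neg_one_mul]
  have hFrob : N ^ q = (2 : F) • M ^ q - M.trace • 1 := by
    have := aeval_pow_card M (C 2 * X - C M.trace)
    simpa [Algebra.smul_def, hN] using this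
  have h2 : (2 : F) ≠ 0 := Ring.two_ne_zero hF
  apply smul_right_injective _ h2
  linear_combination (norm := module) hFrob.symm.trans hNq

lemma pow_card_add_one_eq_det_smul_one (hF : ringChar F ≠ 2) {M : Matrix (Fin 2) (Fin 2) F}
    (hM : ¬ IsSquare M.discr) : M ^ (Fintype.card F + 1) = M.det • 1 := by
  rw [pow_succ, pow_card_eq_trace_smul_one_sub hF hM, sub_mul, smul_mul_assoc, one_mul, ← sq,
    sq_eq_trace_smul_sub_det_smul]
  module

lemma exists_pow_card_add_one_div_two_eq_smul_one (hF : ringChar F ≠ 2)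
    {M : Matrix (Fin 2) (Fin 2) F} (hM : ¬ IsSquare M.discr) (hdet : M.det = 1) :
    ∃ c : F, M ^ ((Fintype.card F + 1) / 2) = c • 1 := by
  refine exists_eq_smul_one_of_mem_span_of_mul_self_eq_one hM (pow_mem_span_one_self M _) ?_
  have hq : (Fintype.card F + 1) / 2 + (Fintype.card F + 1) / 2 = Fintype.card F + 1 := by
    have := FiniteField.odd_card_of_char_ne_two hF; omega
  rw [← pow_add, hq, pow_card_add_one_eq_det_smul_one hF hM, hdet, one_smul]

end FiniteField

lemma SpecialLinearGroup.mem_center_iff_exists_eq_smul_one {n R : Type*} [Fintype n]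
    [DecidableEq n] [CommRing R] {A : SpecialLinearGroup n R} :
    A ∈ Subgroup.center (SpecialLinearGroup n R) ↔ ∃ c : R, (A : Matrix n n R) = c • 1 := by
  rw [SpecialLinearGroup.mem_center_iff]
  constructor
  · rintro ⟨c, -, hc⟩
    exact ⟨c, by rw [← hc, smul_one_eq_diagonal]; rfl⟩
  · rintro ⟨c, hc⟩
    refine ⟨c, ?_, by rw [hc, smul_one_eq_diagonal]; rfl⟩
    simpa [hc] using A.det_coe

namespace SpecialLinearGroup

variable {K : Type*} [Field K] {γ : SpecialLinearGroup (Fin 2) K}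

lemma notMem_center_of_not_isSquare_discr
    (hγ : ¬ IsSquare (γ : Matrix (Fin 2) (Fin 2) K).discr) :
    γ ∉ Subgroup.center (SpecialLinearGroup (Fin 2) K) := by
  rw [mem_center_iff_exists_eq_smul_one]
  rintro ⟨c, hc⟩
  exact hγ (by rw [hc, discr_smul_one]; exact IsSquare.zero)

lemma pow_mem_center_of_mulVec_eq_smul (hγ : ¬ IsSquare (γ : Matrix (Fin 2) (Fin 2) K).discr)
    (k : ℕ) {v : Fin 2 → K} (hv : v ≠ 0) {c : K}
    (h : (γ : Matrix (Fin 2) (Fin 2) K) ^ k *ᵥ v = c • v) :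
    γ ^ k ∈ Subgroup.center (SpecialLinearGroup (Fin 2) K) :=
  mem_center_iff_exists_eq_smul_one.mpr
    ⟨c, eq_smul_one_of_mem_span_of_mulVec_eq_smul hγ (pow_mem_span_one_self _ k) hv h⟩

lemma pow_card_add_one_div_two_mem_center [Fintype K] (hK : ringChar K ≠ 2)
    (hγ : ¬ IsSquare (γ : Matrix (Fin 2) (Fin 2) K).discr) :
    γ ^ ((Fintype.card K + 1) / 2) ∈ Subgroup.center (SpecialLinearGroup (Fin 2) K) :=
  mem_center_iff_exists_eq_smul_one.mpr
    (exists_pow_card_add_one_div_two_eq_smul_one hK hγ γ.det_coe)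

end SpecialLinearGroup

end Matrix

lemma QuotientGroup.orderOf_mk_dvd_iff {G : Type*} [Group G] {N : Subgroup G} [N.Normal] (g : G)
    (k : ℕ) : orderOf (g : G ⧸ N) ∣ k ↔ g ^ k ∈ N := by
  rw [orderOf_dvd_iff_pow_eq_one, ← QuotientGroup.mk_pow, QuotientGroup.eq_one_iff]

namespace MulAction

variable {G α : Type*} [Group G] [MulAction G α]

lemma card_orbit_zpowers_eq {g : G} {x : α} {l : ℕ} (h : ∀ k : ℕ, g ^ k • x = x ↔ l ∣ k) :
    Nat.card (orbit (Subgroup.zpowers g) x) = l := by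
  have hperiod : Function.minimalPeriod (g • ·) x = l :=
    Nat.dvd_antisymm (pow_smul_eq_iff_minimalPeriod_dvd.mp ((h l).mpr dvd_rfl))
      ((h _).mp (pow_smul_eq_iff_minimalPeriod_dvd.mpr dvd_rfl))
  rw [Nat.card_congr (orbitZPowersEquiv g x), Nat.card_zmod, hperiod]

lemma card_eq_card_quotient_mul_of_card_orbit_eq [Finite α] {l : ℕ}
    (h : ∀ x : α, Nat.card (orbit G x) = l) :
    Nat.card α = Nat.card (orbitRel.Quotient G α) * l := by
  have := Fintype.ofFinite (orbitRel.Quotient G α)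
  rw [Nat.card_congr (selfEquivSigmaOrbits G α), Nat.card_sigma]
  simp [h, Nat.card_eq_fintype_card]

end MulAction

lemma Matrix.mulVec_ne_zero_of_isUnit {K n : Type*} [Field K] [Fintype n] [DecidableEq n]
    {A : Matrix n n K} (hA : IsUnit A) {v : n → K} (hv : v ≠ 0) : A *ᵥ v ≠ 0 :=
  (mulVec_injective_iff_isUnit.mpr hA).ne_iff' (mulVec_zero A) |>.mpr hv

namespace Projectivization

variable {K n : Type*} [Field K] [Fintype n] [DecidableEq n] {A : Matrix n n K}

lemma pow_apply_mk_of_forall_apply_mk (hA : IsUnit A)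
    {σ : Equiv.Perm (Projectivization K (n → K))}
    (hσ : ∀ (v : n → K) (hv : v ≠ 0) (hv' : A *ᵥ v ≠ 0), σ (mk K v hv) = mk K (A *ᵥ v) hv')
    (k : ℕ) {v : n → K} (hv : v ≠ 0) :
    (σ ^ k) (mk K v hv) = mk K (A ^ k *ᵥ v) (mulVec_ne_zero_of_isUnit (hA.pow k) hv) := by
  induction k with
  | zero => simp
  | succ k ih =>
    rw [pow_succ', Equiv.Perm.mul_apply, ih, hσ _ _ (mulVec_ne_zero_of_isUnit hA _)]
    · simp [pow_succ', mulVec_mulVec]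
    · exact mulVec_ne_zero_of_isUnit (hA.pow k) hv

lemma pow_apply_mk_eq_self_iff_of_forall_apply_mk (hA : IsUnit A)
    {σ : Equiv.Perm (Projectivization K (n → K))}
    (hσ : ∀ (v : n → K) (hv : v ≠ 0) (hv' : A *ᵥ v ≠ 0), σ (mk K v hv) = mk K (A *ᵥ v) hv')
    (k : ℕ) {v : n → K} (hv : v ≠ 0) :
    (σ ^ k) (mk K v hv) = mk K v hv ↔ ∃ c : K, A ^ k *ᵥ v = c • v := by
  rw [pow_apply_mk_of_forall_apply_mk hA hσ, mk_eq_mk_iff']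
  exact exists_congr fun _ => eq_comm

lemma pow_apply_eq_self_iff_pow_mem_center {γ : SpecialLinearGroup (Fin 2) K}
    (hγ : ¬ IsSquare (γ : Matrix (Fin 2) (Fin 2) K).discr)
    {σ : Equiv.Perm (Projectivization K (Fin 2 → K))}
    (hσ : ∀ (v : Fin 2 → K) (hv : v ≠ 0) (hv' : (γ : Matrix (Fin 2) (Fin 2) K) *ᵥ v ≠ 0),
      σ (mk K v hv) = mk K ((γ : Matrix (Fin 2) (Fin 2) K) *ᵥ v) hv') (k : ℕ)
    (x : Projectivization K (Fin 2 → K)) :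
    (σ ^ k) x = x ↔ γ ^ k ∈ Subgroup.center (SpecialLinearGroup (Fin 2) K) := by
  induction x using Projectivization.ind with
  | h v hv =>
    rw [pow_apply_mk_eq_self_iff_of_forall_apply_mk
      ((isUnit_iff_isUnit_det _).mpr (by simp)) hσ]
    constructor
    · rintro ⟨c, hc⟩
      exact SpecialLinearGroup.pow_mem_center_of_mulVec_eq_smul hγ k hv hc
    · intro h
      obtain ⟨c, hc⟩ := SpecialLinearGroup.mem_center_iff_exists_eq_smul_one.mp h
      have hc' : (γ : Matrix (Fin 2) (Fin 2) K) ^ k = c • 1 := hc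
      exact ⟨c, by rw [hc', smul_mulVec, one_mulVec]⟩

end Projectivization

/-- Let `p` be an odd prime and `γ ∈ SL₂(𝔽_p)` such that `(tr γ)² - 4` is a nonzero non-square
in `𝔽_p`, and let `l` be the order of the image of `γ` in `PSL₂(𝔽_p)` (the quotient of
`SL₂(𝔽_p)` by its center `{±I}`).  Then `l ∣ (p+1)/2`, `l > 1`, the action of `γ` on the
projective line `ℙ¹(𝔽_p)` has no fixed points, and every orbit has cardinality exactly `l`;
in particular the cycle type is `(l^{(p+1)/l})`. -/
theorem stmt16 (p : ℕ) [Fact p.Prime] (hodd : Odd p)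
    (γ : Matrix.SpecialLinearGroup (Fin 2) (ZMod p))
    (htr : Matrix.trace γ.1 ^ 2 - 4 ≠ 0 ∧ ¬ IsSquare (Matrix.trace γ.1 ^ 2 - 4))
    (l : ℕ)
    (hl : l = orderOf (QuotientGroup.mk γ :
      Matrix.SpecialLinearGroup (Fin 2) (ZMod p) ⧸
        Subgroup.center (Matrix.SpecialLinearGroup (Fin 2) (ZMod p))))
    (σ : Equiv.Perm (Projectivization (ZMod p) (Fin 2 → ZMod p)))
    (hσ : ∀ (v : Fin 2 → ZMod p) (hv : v ≠ 0) (hv' : γ.1.mulVec v ≠ 0),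
      σ (Projectivization.mk (ZMod p) v hv) =
        Projectivization.mk (ZMod p) (γ.1.mulVec v) hv') :
    l ∣ (p + 1) / 2 ∧ 1 < l ∧
    (∀ x : Projectivization (ZMod p) (Fin 2 → ZMod p), σ x ≠ x) ∧
    (∀ x : Projectivization (ZMod p) (Fin 2 → ZMod p),
      Nat.card (MulAction.orbit (Subgroup.zpowers σ) x) = l) ∧
    Nat.card (MulAction.orbitRel.Quotient (Subgroup.zpowers σ)
        (Projectivization (ZMod p) (Fin 2 → ZMod p))) = (p + 1) / l := by
  have hdiscr : ¬ IsSquare γ.1.discr := by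
    rw [discr_fin_two, γ.det_coe, mul_one]
    exact htr.2
  have hchar : ringChar (ZMod p) ≠ 2 := by
    rw [ZMod.ringChar_zmod_n]
    rintro rfl
    exact Nat.not_odd_iff_even.mpr even_two hodd
  have hl_dvd : ∀ k : ℕ, l ∣ k ↔ γ ^ k ∈ Subgroup.center _ := fun k => by
    rw [hl, QuotientGroup.orderOf_mk_dvd_iff]
  have hfix : ∀ (k : ℕ) (x : Projectivization (ZMod p) (Fin 2 → ZMod p)),
      (σ ^ k) x = x ↔ l ∣ k := fun k x => by
    rw [Projectivization.pow_apply_eq_self_iff_pow_mem_center hdiscr hσ, hl_dvd]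
  have horbit : ∀ x, Nat.card (MulAction.orbit (Subgroup.zpowers σ) x) = l :=
    fun x => MulAction.card_orbit_zpowers_eq (hfix · x)
  have hcard := MulAction.card_eq_card_quotient_mul_of_card_orbit_eq horbit
  rw [Projectivization.card_of_finrank_two _ _ (Module.finrank_fin_fun _), Nat.card_zmod] at hcard
  have hl_pos : 0 < l := hl ▸ orderOf_pos _
  have hl_ne_one : l ≠ 1 := fun h => SpecialLinearGroup.notMem_center_of_not_isSquare_discr hdiscr
    (by simpa using (hl_dvd 1).mp (h ▸ dvd_rfl))
  refine ⟨?_, by omega,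
    fun x h => hl_ne_one (Nat.dvd_one.mp ((hfix 1 x).mp (by rwa [pow_one]))), horbit, ?_⟩
  · have := SpecialLinearGroup.pow_card_add_one_div_two_mem_center hchar hdiscr
    rwa [ZMod.card, ← hl_dvd] at this
  · rw [hcard, Nat.mul_div_cancel _ hl_pos]
end

section
/- Let p be an odd prime and r a positive integer. The maximal normal subgroup of SL₂(ℤ) contained in Γ₀(p^r) (i.e. the normal core of Γ₀(p^r) in SL₂(ℤ), the intersection of all SL₂(ℤ)-conjugates of Γ₀(p^r)) equals {γ ∈ SL₂(ℤ) : γ ≡ I mod p^r or γ ≡ −I mod p^r}. -/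
open Matrix CongruenceSubgroup
open Matrix.SpecialLinearGroup
open scoped MatrixGroups


/-- For `p` an odd prime and `r ≥ 1`, the normal core of `Γ₀(p^r)` in `SL(2, ℤ)` (the largest
normal subgroup of `SL(2, ℤ)` contained in `Γ₀(p^r)`) consists exactly of those `γ` with
`γ ≡ I mod p^r` or `γ ≡ -I mod p^r` (all entries of `γ ∓ I` divisible by `p^r`). -/
theorem stmt18 (p r : ℕ) (hp : p.Prime) (hodd : Odd p) (hr : 0 < r)
    (γ : Matrix.SpecialLinearGroup (Fin 2) ℤ) :
    γ ∈ (CongruenceSubgroup.Gamma0 (p ^ r)).normalCore ↔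
      ((∀ i j : Fin 2, ((p : ℤ) ^ r) ∣ (γ.1 i j - (1 : Matrix (Fin 2) (Fin 2) ℤ) i j)) ∨
        (∀ i j : Fin 2, ((p : ℤ) ^ r) ∣ (γ.1 i j - (-1 : Matrix (Fin 2) (Fin 2) ℤ) i j))) := by
  have hNZ : (((p ^ r : ℕ) : ℤ)) = (p:ℤ)^r := by push_cast; ring
  constructor
  · intro h
    have key : ∀ g : SL(2,ℤ), ((p:ℤ)^r) ∣ ((g * γ * g⁻¹ : SL(2,ℤ)).1 1 0) := by
      intro g
      have hg : g * γ * g⁻¹ ∈ Gamma0 (p ^ r) := h g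
      rw [Gamma0_mem] at hg
      rw [← hNZ, ← ZMod.intCast_zmod_eq_zero_iff_dvd]
      simpa [coe_matrix_coe] using hg
    have h1 := key 1
    simp at h1
    have hS := key ⟨!![0,-1;1,0], by norm_num [Matrix.det_fin_two_of]⟩
    erw [coe_mul, coe_mul, coe_inv] at hS
    simp [SL2_inv_expl, coe_mul, Matrix.mul_apply, Matrix.vecMul, dotProduct,
      Fin.sum_univ_succ, adjugate_fin_two] at hS
    have hL := key ⟨!![1,0;1,1], by norm_num [Matrix.det_fin_two_of]⟩
    erw [coe_mul, coe_mul, coe_inv] at hL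
    simp [SL2_inv_expl, coe_mul, Matrix.mul_apply, Matrix.vecMul, dotProduct,
      Fin.sum_univ_succ, adjugate_fin_two] at hL
    have hdet := γ.2
    rw [Matrix.det_fin_two] at hdet
    have had : ((p:ℤ)^r) ∣ γ.1 0 0 - γ.1 1 1 := by
      have h2 := dvd_add (dvd_sub hL h1) hS
      convert h2 using 1
      · rfl
      ring
    have haa : ((p:ℤ)^r) ∣ (γ.1 0 0 - 1) * (γ.1 0 0 + 1) := by
      have h2 := dvd_add (had.mul_left (γ.1 0 0)) (hS.mul_right (γ.1 1 0))
      convert h2 using 1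
      · rfl
      linear_combination hdet
    have hpZ : Prime ((p:ℤ)) := Nat.prime_iff_prime_int.mp hp
    have hp2 : p ≠ 2 := by
      rintro rfl
      simp [Nat.odd_iff] at hodd
    by_cases hd1 : ((p:ℤ)) ∣ γ.1 0 0 - 1
    · left
      have hnd : ¬ ((p:ℤ)) ∣ γ.1 0 0 + 1 := by
        intro hcon
        have h2 : ((p:ℤ)) ∣ 2 := by
          have := dvd_sub hcon hd1
          convert this using 1
          · rfl
          ring
        have h3 : p ∣ 2 := by exact_mod_cast h2
        exact hp2 ((Nat.prime_dvd_prime_iff_eq hp Nat.prime_two).1 h3)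
      have ha1 : ((p:ℤ)^r) ∣ γ.1 0 0 - 1 :=
        hpZ.pow_dvd_of_dvd_mul_left r hnd (by rwa [mul_comm] at haa)
      have hdd : ((p:ℤ)^r) ∣ γ.1 1 1 - 1 := by
        have := dvd_sub ha1 had
        convert this using 1
        · rfl
        ring
      intro i j
      fin_cases i <;> fin_cases j <;>
        simp only [Matrix.one_apply, if_pos rfl, Fin.isValue] <;> simp <;>
        [exact ha1; exact hS; exact h1; exact hdd]
    · right
      have ha1 : ((p:ℤ)^r) ∣ γ.1 0 0 + 1 :=
        hpZ.pow_dvd_of_dvd_mul_left r hd1 haa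
      have hdd : ((p:ℤ)^r) ∣ γ.1 1 1 + 1 := by
        have := dvd_sub ha1 had
        convert this using 1
        · rfl
        ring
      intro i j
      fin_cases i <;> fin_cases j <;>
        simp only [Matrix.one_apply, Fin.isValue, Matrix.neg_apply] <;> simp <;>
        [exact ha1; exact hS; exact h1; exact hdd]
  · intro hγ
    set π := SpecialLinearGroup.map (n := Fin 2) (Int.castRingHom (ZMod (p^r))) with hπdef
    have hcast : ∀ A : SL(2,ℤ), ((A.1 1 0 : ℤ) : ZMod (p^r)) = (π A).1 1 0 := by
      intro A
      simp [hπdef]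
    have hent : ∀ (M : Matrix (Fin 2) (Fin 2) ℤ) (i j : Fin 2),
        (((p:ℤ)^r) ∣ γ.1 i j - M i j) →
        ((γ.1 i j : ℤ) : ZMod (p^r)) = ((M i j : ℤ) : ZMod (p^r)) := by
      intro M i j hij
      rw [← sub_eq_zero, ← Int.cast_sub, ZMod.intCast_zmod_eq_zero_iff_dvd, hNZ]
      exact hij
    have hpm : π γ = 1 ∨ (π γ).1 = -1 := by
      rcases hγ with h1 | h1
      · left
        ext i j
        have := hent 1 i j (h1 i j)
        fin_cases i <;> fin_cases j <;> simpa [hπdef, Matrix.one_apply] using this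
      · right
        ext i j
        have := hent (-1) i j (h1 i j)
        fin_cases i <;> fin_cases j <;>
          simpa [hπdef, Matrix.one_apply, Matrix.neg_apply] using this
    intro g
    rw [Gamma0_mem]
    have e1 : ((((g * γ * g⁻¹ : SL(2,ℤ)).1 1 0 : ℤ) : ZMod (p^r))) = (π (g * γ * g⁻¹)).1 1 0 :=
      hcast _
    rw [e1]
    rcases hpm with h1 | h1
    · rw [_root_.map_mul, _root_.map_mul, _root_.map_inv, h1, mul_one, mul_inv_cancel]
      simp
    · rw [_root_.map_mul, _root_.map_mul, _root_.map_inv, coe_mul, coe_mul, h1]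
      have h2 : (π g).1 * (-1 : Matrix (Fin 2) (Fin 2) (ZMod (p^r))) * ((π g)⁻¹).1
          = -(1 : Matrix (Fin 2) (Fin 2) (ZMod (p^r))) := by
        rw [mul_neg_one, neg_mul, ← coe_mul, mul_inv_cancel, coe_one]
      rw [h2]
      simp
end
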